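/- The number of lower ideals of [2] × K_{n-1} is (n+2)(2n+1), where K_{n-1} is the ordinal sum of an (n-1)-chain, a 2-element antichain, and an (n-1)-chain. -/

import Mathlib

/-!
Lower ideals of `Fin 2 × P` are pairs `B ⊆ A` of lower sets of `P`, so we must count the comparable
pairs of the lattice `J(K_m)` of lower sets of `K_m`, `m = n - 1`. This lattice is again of the
same shape: `J(K_m) ≅ K_{m+1}`, the element `x` of `K_{m+1}` corresponding to the set of `y ∈ K_m`
whose shift (`Fin.succ` on both chains, the identity on the antichain) lies below `x`. In an
ordinal sum `α ⊕ₗ β` the comparable pairs are those of `α`, those of `β`, and all of `α × β`, so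
`K_n` has `2·C(n+1, 2) + n(n+2) + 2n + 2 = (n+2)(2n+1)` of them.
-/

/-- The poset `K_n = [n] ⊕ ([1] ⊔ [1]) ⊕ [n]`. -/
abbrev K (n : ℕ) : Type := Fin n ⊕ₗ ((Fin 1 ⊕ Fin 1) ⊕ₗ Fin n)

instance (n : ℕ) : Fintype (K n) :=
  inferInstanceAs (Fintype (Fin n ⊕ ((Fin 1 ⊕ Fin 1) ⊕ Fin n)))

theorem natCard_le_pairs_sumLex (α β : Type*) [Preorder α] [Preorder β] [Finite α] [Finite β] :
    Nat.card {p : (α ⊕ₗ β) × (α ⊕ₗ β) // p.1 ≤ p.2} =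
      Nat.card {p : α × α // p.1 ≤ p.2} + Nat.card α * Nat.card β +
        Nat.card {p : β × β // p.1 ≤ p.2} := by
  classical
  have := Fintype.ofFinite α
  have := Fintype.ofFinite β
  simp only [Nat.card_eq_fintype_card, Fintype.card_subtype, Finset.card_filter,
    Fintype.sum_prod_type]
  rw [← (toLex : α ⊕ β ≃ _).sum_comp]
  simp only [← (toLex : α ⊕ β ≃ _).sum_comp (fun y => if toLex _ ≤ y then 1 else 0),
    Fintype.sum_sum_type, Sum.Lex.inl_le_inl_iff, Sum.Lex.inr_le_inr_iff,
    Sum.Lex.inl_le_inr, Sum.Lex.not_inr_le_inl]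
  simp [Finset.sum_add_distrib]

theorem natCard_le_pairs_of_linearOrder (α : Type*) [LinearOrder α] :
    Nat.card {p : α × α // p.1 ≤ p.2} = (Nat.card α + 1).choose 2 := by
  rw [← Nat.card_congr Sym2.sortEquiv, Sym2.natCard]

theorem natCard_le_pairs_finOne_sum_finOne :
    Nat.card {p : (Fin 1 ⊕ Fin 1) × (Fin 1 ⊕ Fin 1) // p.1 ≤ p.2} = 2 := by
  have diag : ∀ p : (Fin 1 ⊕ Fin 1) × (Fin 1 ⊕ Fin 1), p.1 ≤ p.2 ↔ p.1 = p.2 := by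
    rintro ⟨a | a, b | b⟩ <;> simp [Subsingleton.elim a b]
  rw [Nat.card_congr (Equiv.subtypeEquivRight diag), Nat.card_eq_fintype_card]
  rfl

theorem OrderIso.natCard_le_pairs_eq {α β : Type*} [Preorder α] [Preorder β] (e : α ≃o β) :
    Nat.card {p : α × α // p.1 ≤ p.2} = Nat.card {p : β × β // p.1 ≤ p.2} :=
  Nat.card_congr ((e.toEquiv.prodCongr e.toEquiv).subtypeEquiv fun _ => e.le_iff_le.symm)

noncomputable def LowerSet.finsetEquiv (α : Type*) [Preorder α] [Fintype α] :
    {I : Finset α // IsLowerSet (I : Set α)} ≃ LowerSet α where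
  toFun I := ⟨I, I.2⟩
  invFun L := ⟨Fintype.finsetEquivSet.symm L, by simp [Fintype.finsetEquivSet, L.lower]⟩
  left_inv I := by simp [Fintype.finsetEquivSet]
  right_inv L := by ext; simp [Fintype.finsetEquivSet]

def LowerSet.finTwoProdEquiv (α : Type*) [Preorder α] :
    LowerSet (Fin 2 × α) ≃ {p : LowerSet α × LowerSet α // p.1 ≤ p.2} where
  toFun I :=
    ⟨(⟨Prod.mk 1 ⁻¹' (I : Set (Fin 2 × α)), I.lower.preimage fun _ _ h => ⟨le_rfl, h⟩⟩,
      ⟨Prod.mk 0 ⁻¹' (I : Set (Fin 2 × α)), I.lower.preimage fun _ _ h => ⟨le_rfl, h⟩⟩),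
      fun _ => I.lower ⟨Fin.zero_le _, le_rfl⟩⟩
  invFun p := LowerSet.Iic (0 : Fin 2) ×ˢ p.1.2 ⊔ (⊤ : LowerSet (Fin 2)) ×ˢ p.1.1
  left_inv I := by
    ext ⟨i, a⟩
    simp only [LowerSet.mem_sup_iff, LowerSet.mem_prod, LowerSet.mem_Iic_iff, LowerSet.mem_top,
      true_and, LowerSet.mem_mk, Set.mem_preimage, SetLike.mem_coe]
    fin_cases i
    · simpa using I.lower ⟨Fin.zero_le 1, le_refl a⟩
    · simp
  right_inv p := by
    ext a <;> simp only [LowerSet.mem_sup_iff, LowerSet.mem_prod, LowerSet.mem_Iic_iff,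
      LowerSet.mem_top, LowerSet.mem_mk, Set.mem_preimage, SetLike.mem_coe]
    · simp
    · simpa using fun h => p.2 h

theorem Fin.exists_succ_le_iff_of_isLowerSet {n : ℕ} {s : Set (Fin n)} (hs : IsLowerSet s) :
    ∃ k : Fin (n + 1), ∀ j, j ∈ s ↔ j.succ ≤ k := by
  rcases hs.eq_univ_or_Iio with rfl | ⟨a, rfl⟩
  · exact ⟨Fin.last n, fun j => iff_of_true trivial (Fin.le_last _)⟩
  · exact ⟨a.castSucc, fun j => by simp⟩

namespace K

variable {m : ℕ}

def bot (i : Fin m) : K m := toLex (.inl i)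
def mid (c : Fin 1 ⊕ Fin 1) : K m := toLex (.inr (toLex (.inl c)))
def top (i : Fin m) : K m := toLex (.inr (toLex (.inr i)))

@[elab_as_elim]
theorem induction {P : K m → Prop} (bot : ∀ i, P (bot i)) (mid : ∀ c, P (mid c))
    (top : ∀ i, P (top i)) (x : K m) : P x := by
  rcases x with i | (c | i)
  exacts [bot i, mid c, top i]

@[simp] theorem bot_le_bot_iff {i j : Fin m} : bot i ≤ bot j ↔ i ≤ j := Sum.Lex.inl_le_inl_iff
@[simp] theorem bot_le_mid (i : Fin m) (c) : bot i ≤ mid c := Sum.Lex.inl_le_inr _ _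
@[simp] theorem bot_le_top (i j : Fin m) : bot i ≤ top j := Sum.Lex.inl_le_inr _ _
@[simp] theorem mid_le_mid_iff {c d : Fin 1 ⊕ Fin 1} : (mid c : K m) ≤ mid d ↔ c = d := by
  rw [mid, mid, Sum.Lex.inr_le_inr_iff, Sum.Lex.inl_le_inl_iff]
  rcases c with c | c <;> rcases d with d | d <;> simp [Subsingleton.elim c d]
@[simp] theorem mid_le_top (c) (i : Fin m) : mid c ≤ top i :=
  Sum.Lex.inr_le_inr_iff.2 (Sum.Lex.inl_le_inr _ _)
@[simp] theorem top_le_top_iff {i j : Fin m} : top i ≤ top j ↔ i ≤ j :=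
  Sum.Lex.inr_le_inr_iff.trans Sum.Lex.inr_le_inr_iff
@[simp] theorem not_mid_le_bot (c) (i : Fin m) : ¬mid c ≤ bot i := Sum.Lex.not_inr_le_inl
@[simp] theorem not_top_le_bot (i j : Fin m) : ¬top i ≤ bot j := Sum.Lex.not_inr_le_inl
@[simp] theorem not_top_le_mid (i : Fin m) (c) : ¬top i ≤ mid c :=
  fun h => Sum.Lex.not_inr_le_inl (Sum.Lex.inr_le_inr_iff.1 h)

def shift (x : K m) : K (m + 1) :=
  match ofLex x with
  | .inl i => bot i.succ
  | .inr y =>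
    match ofLex y with
    | .inl c => mid c
    | .inr i => top i.succ

@[simp] theorem shift_bot (i : Fin m) : shift (bot i) = bot i.succ := rfl
@[simp] theorem shift_mid (c) : shift (mid c : K m) = mid c := rfl
@[simp] theorem shift_top (i : Fin m) : shift (top i) = top i.succ := rfl

theorem monotone_shift : Monotone (shift : K m → K (m + 1)) := by
  intro x y h
  induction x using K.induction <;> induction y using K.induction <;> simp_all

theorem bot_zero_le (x : K (m + 1)) : bot 0 ≤ x := by
  induction x using K.induction <;> simp

theorem top_zero_le_of_mid_le {x : K (m + 1)} (ha : mid (.inl 0) ≤ x) (hb : mid (.inr 0) ≤ x) :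
    top 0 ≤ x := by
  induction x using K.induction <;> simp_all
  subst ha
  simp at hb

def lowerSetOf (x : K (m + 1)) : LowerSet (K m) :=
  ⟨shift ⁻¹' Set.Iic x, (isLowerSet_Iic x).preimage monotone_shift⟩

@[simp] theorem mem_lowerSetOf {x : K (m + 1)} {y : K m} : y ∈ lowerSetOf x ↔ shift y ≤ x :=
  Iff.rfl

theorem lowerSetOf_le_lowerSetOf_iff {x y : K (m + 1)} : lowerSetOf x ≤ lowerSetOf y ↔ x ≤ y := by
  refine ⟨fun h => ?_, fun h z hz => le_trans hz h⟩
  have reflect (z : K m) (hz : shift z ≤ x) : shift z ≤ y := h hz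
  induction x using K.induction with
  | bot i =>
    cases i using Fin.cases with
    | zero => exact bot_zero_le y
    | succ i => exact reflect (bot i) le_rfl
  | mid c => exact reflect (mid c) le_rfl
  | top i =>
    cases i using Fin.cases with
    | zero => exact top_zero_le_of_mid_le (reflect (mid _) (by simp)) (reflect (mid _) (by simp))
    | succ i => exact reflect (top i) le_rfl

theorem lowerSetOf_surjective : Function.Surjective (lowerSetOf : K (m + 1) → LowerSet (K m)) := by
  intro L
  have mid_mem (c) (i : Fin m) (h : top i ∈ L) : mid c ∈ L := L.lower (mid_le_top c i) h
  have bot_mem (i : Fin m) (c) (h : mid c ∈ L) : bot i ∈ L := L.lower (bot_le_mid i c) h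
  have mid_cases (c : Fin 1 ⊕ Fin 1) : c = .inl 0 ∨ c = .inr 0 := by
    rcases c with c | c <;> simp [Subsingleton.elim c 0]
  by_cases ha : mid (.inl 0) ∈ L <;> by_cases hb : mid (.inr 0) ∈ L
  · obtain ⟨k, hk⟩ := Fin.exists_succ_le_iff_of_isLowerSet
      (L.lower.preimage fun _ _ => (top_le_top_iff (m := m)).2)
    refine ⟨top k, SetLike.ext fun y => ?_⟩
    induction y using K.induction with
    | bot i => simpa using bot_mem i _ ha
    | mid c => rcases mid_cases c with rfl | rfl <;> simpa
    | top i => simpa using (hk i).symm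
  · refine ⟨mid (.inl 0), SetLike.ext fun y => ?_⟩
    induction y using K.induction with
    | bot i => simpa using bot_mem i _ ha
    | mid c => rcases mid_cases c with rfl | rfl <;> simpa
    | top i => simpa using fun h => hb (mid_mem _ i h)
  · refine ⟨mid (.inr 0), SetLike.ext fun y => ?_⟩
    induction y using K.induction with
    | bot i => simpa using bot_mem i _ hb
    | mid c => rcases mid_cases c with rfl | rfl <;> simpa
    | top i => simpa using fun h => ha (mid_mem _ i h)
  · obtain ⟨k, hk⟩ := Fin.exists_succ_le_iff_of_isLowerSet
      (L.lower.preimage fun _ _ => (bot_le_bot_iff (m := m)).2)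
    refine ⟨bot k, SetLike.ext fun y => ?_⟩
    induction y using K.induction with
    | bot i => simpa using (hk i).symm
    | mid c => rcases mid_cases c with rfl | rfl <;> simpa
    | top i => simpa using fun h => ha (mid_mem _ i h)

noncomputable def orderIsoLowerSet (m : ℕ) : K (m + 1) ≃o LowerSet (K m) :=
  .ofSurjective (.ofMapLEIff lowerSetOf fun _ _ => lowerSetOf_le_lowerSetOf_iff)
    lowerSetOf_surjective

theorem natCard_le_pairs (n : ℕ) :
    Nat.card {p : K n × K n // p.1 ≤ p.2} = (n + 2) * (2 * n + 1) := by
  have choose_two : (n + 1).choose 2 * 2 = (n + 1) * n := by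
    rw [← Nat.add_one_mul_choose_eq, Nat.choose_one_right]
  rw [natCard_le_pairs_sumLex, natCard_le_pairs_sumLex, natCard_le_pairs_finOne_sum_finOne,
    natCard_le_pairs_of_linearOrder]
  simp only [Nat.card_eq_fintype_card, Fintype.card_lex, Fintype.card_sum, Fintype.card_fin]
  nlinarith

end K

/-- For `n ≥ 1`, the number of lower ideals of `[2] × K_{n-1}` is `(n+2)(2n+1)`. -/
theorem card_lowerIdeals_chain2_K (n : ℕ) (hn : 1 ≤ n) :
    Nat.card {I : Finset (Fin 2 × K (n - 1)) //
        IsLowerSet (I : Set (Fin 2 × K (n - 1)))} = (n + 2) * (2 * n + 1) := by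
  obtain ⟨m, rfl⟩ := Nat.exists_eq_add_of_le' hn
  rw [Nat.add_sub_cancel]
  calc _ = Nat.card (LowerSet (Fin 2 × K m)) := Nat.card_congr (LowerSet.finsetEquiv _)
    _ = Nat.card {p : LowerSet (K m) × LowerSet (K m) // p.1 ≤ p.2} :=
      Nat.card_congr (LowerSet.finTwoProdEquiv _)
    _ = Nat.card {p : K (m + 1) × K (m + 1) // p.1 ≤ p.2} :=
      (K.orderIsoLowerSet m).natCard_le_pairs_eq.symm
    _ = (m + 1 + 2) * (2 * (m + 1) + 1) := K.natCard_le_pairs (m + 1)
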